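/- arXiv:1111.4591 — 2 statements merged into one kernel-verified Lean document; each statement's English description precedes it below -/
import Mathlib

section
/- Let F : ℝ → [0,1] be a continuous strictly increasing distribution function with density f satisfying inf_{|x - τ_α| ≤ θ} f(x) = c > 0 for α in a closed interval I ⊂ (0,1), where τ_α = F⁻¹(α). Let G : ℝ → [0,1] be any distribution function with sup_x |G(x) - F(x)| ≤ δ, where 0 < δ ≤ εc/2 and 0 < ε ≤ θ. Then the quantile τ_α^G = inf{x : G(x) ≥ α} satisfies |τ_α^G - τ_α| ≤ ε for all α ∈ I. -/
/-- Localization of quantiles: if `G` is uniformly `δ`-close to `F` with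
`δ ≤ εc/2`, `ε ≤ θ`, and the density `f` of `F` is bounded below by `c` on
`θ`-neighborhoods of the quantiles `τ_α`, `α ∈ I`, then the `α`-quantile of `G`
is within `ε` of `τ_α`. -/
theorem stmt_9 (F f : ℝ → ℝ) (hF_mono : StrictMono F) (hF_cont : Continuous F)
    (hdens : ∀ a b : ℝ, a ≤ b → F b - F a = ∫ x in a..b, f x)
    (I : Set ℝ) (hI : I ⊆ Set.Ioo (0:ℝ) 1) (hI' : IsClosed I)
    (τ : ℝ → ℝ) (hτ : ∀ α ∈ I, F (τ α) = α)
    (c θ : ℝ) (hc : 0 < c) (hθ : 0 < θ)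
    (hlow : ∀ α ∈ I, ∀ x : ℝ, |x - τ α| ≤ θ → c ≤ f x)
    (G : ℝ → ℝ) (hG : Monotone G)
    (δ ε : ℝ) (hδ0 : 0 < δ) (hδ : δ ≤ ε * c / 2) (hε0 : 0 < ε) (hε : ε ≤ θ)
    (hclose : ∀ x, |G x - F x| ≤ δ) :
    ∀ α ∈ I, |sInf {x : ℝ | α ≤ G x} - τ α| ≤ ε := by
  intro α hα
  set t := τ α with ht
  have hFt : F t = α := hτ α hα
  have hεc : 0 < ε * c := mul_pos hε0 hc
  have key : ∀ a b : ℝ, a < b → (∀ x ∈ Set.Icc a b, c ≤ f x) →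
      (b - a) * c ≤ F b - F a := by
    intro a b hab hcf
    have hint : IntervalIntegrable f MeasureTheory.volume a b := by
      by_contra h
      have h0 := hdens a b hab.le
      rw [intervalIntegral.integral_undef h] at h0
      have := hF_mono hab
      linarith
    have hconst : IntervalIntegrable (fun _ : ℝ => c) MeasureTheory.volume a b :=
      intervalIntegrable_const
    have hmono := intervalIntegral.integral_mono_on hab.le hconst hint hcf
    rw [intervalIntegral.integral_const] at hmono
    rw [hdens a b hab.le]
    simpa [smul_eq_mul, mul_comm] using hmono
  have h1 : ε * c ≤ F (t + ε) - F t := by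
    have hk := key t (t + ε) (by linarith) (fun x hx => hlow α hα x (by
      rw [abs_le]; exact ⟨by linarith [hx.1], by linarith [hx.2]⟩))
    have : (t + ε - t) * c = ε * c := by ring
    linarith
  have h2 : ε * c ≤ F t - F (t - ε) := by
    have hk := key (t - ε) t (by linarith) (fun x hx => hlow α hα x (by
      rw [abs_le]; exact ⟨by linarith [hx.1], by linarith [hx.2]⟩))
    have : (t - (t - ε)) * c = ε * c := by ring
    linarith
  have hGup : α ≤ G (t + ε) := by
    have hcl := hclose (t + ε)
    rw [abs_le] at hcl
    linarith [hcl.1, hcl.2]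
  have hmem : t + ε ∈ {x : ℝ | α ≤ G x} := hGup
  have hlb : ∀ x ∈ {x : ℝ | α ≤ G x}, t - ε ≤ x := by
    intro x hx
    by_contra h
    push_neg at h
    have hGx : G x ≤ G (t - ε) := hG h.le
    have hcl := hclose (t - ε)
    rw [abs_le] at hcl
    have hlt : G (t - ε) < α := by linarith [hcl.1, hcl.2]
    exact absurd hx (by simp only [Set.mem_setOf_eq, not_le]; linarith)
  have hbdd : BddBelow {x : ℝ | α ≤ G x} := ⟨t - ε, fun x hx => hlb x hx⟩
  have h3 : sInf {x : ℝ | α ≤ G x} ≤ t + ε := csInf_le hbdd hmem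
  have h4 : t - ε ≤ sInf {x : ℝ | α ≤ G x} := le_csInf ⟨_, hmem⟩ hlb
  rw [abs_le]
  constructor <;> linarith
end

section
/- Let X, X_s (s in a directed set) be random variables on a common probability space with X_s → X in probability, and suppose X has a continuous distribution function F. Let x_s → x in ℝ and y_s → y in ℝ. Then P(X_s ≤ x_s, X ≤ y_s) → P(X ≤ min(x, y)) = F(min(x,y)). -/
open MeasureTheory Filter

/-- If `X_s → X` in probability, `X` has a continuous distribution function,
`x_s → x` and `y_s → y`, then `P(X_s ≤ x_s, X ≤ y_s) → P(X ≤ min(x,y))`. -/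
theorem stmt_18 {Ω ι : Type*} [MeasurableSpace Ω] (μ : Measure Ω) [IsProbabilityMeasure μ]
    (l : Filter ι) (X : Ω → ℝ) (Xs : ι → Ω → ℝ)
    (hX : Measurable X) (hXs : ∀ s, Measurable (Xs s))
    (hconv : ∀ ε : ℝ, 0 < ε →
      Tendsto (fun s => μ {ω | ε < |Xs s ω - X ω|}) l (nhds 0))
    (hFcont : ∀ c : ℝ, μ {ω | X ω = c} = 0)
    (xs ys : ι → ℝ) (x y : ℝ)
    (hx : Tendsto xs l (nhds x)) (hy : Tendsto ys l (nhds y)) :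
    Tendsto (fun s => (μ {ω | Xs s ω ≤ xs s ∧ X ω ≤ ys s}).toReal) l
      (nhds ((μ {ω | X ω ≤ min x y}).toReal)) := by
  set m := min x y with hm
  set F : ℝ → ℝ := fun t => (μ {ω | X ω ≤ t}).toReal with hFdef
  -- continuity of F at m: find δ
  have key : ∀ ε : ℝ, 0 < ε → ∃ δ : ℝ, 0 < δ ∧
      F (m + δ) < F m + ε ∧ F m - ε < F (m - δ) := by
    intro ε hε
    have hmeas : ∀ t : ℝ, NullMeasurableSet {ω | X ω ≤ t} μ := fun t =>
      (measurableSet_le hX measurable_const).nullMeasurableSet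
    -- upper: intersection
    have hiInter : ⋂ n : ℕ, {ω | X ω ≤ m + 1 / (n + 1 : ℝ)} = {ω | X ω ≤ m} := by
      ext ω
      simp only [Set.mem_iInter, Set.mem_setOf_eq]
      constructor
      · intro h
        refine le_of_forall_pos_le_add fun δ hδ => ?_
        obtain ⟨n, hn⟩ := exists_nat_one_div_lt hδ
        exact (h n).trans (by linarith)
      · intro h n
        have : (0 : ℝ) < 1 / (n + 1 : ℝ) := by positivity
        linarith
    have hup : Tendsto (fun n : ℕ => μ {ω | X ω ≤ m + 1 / (n + 1 : ℝ)}) atTop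
        (nhds (μ {ω | X ω ≤ m})) := by
      have := tendsto_measure_iInter_atTop (μ := μ)
        (s := fun n : ℕ => {ω | X ω ≤ m + 1 / (n + 1 : ℝ)})
        (fun n => hmeas _)
        (fun a b hab => by
          intro ω hω
          simp only [Set.mem_setOf_eq] at *
          have : (1 : ℝ) / (b + 1) ≤ 1 / (a + 1) := by
            apply one_div_le_one_div_of_le (by positivity)
            exact_mod_cast by omega
          linarith)
        ⟨0, measure_ne_top μ _⟩
      rwa [hiInter] at this
    -- lower: union
    have hiUnion : ⋃ n : ℕ, {ω | X ω ≤ m - 1 / (n + 1 : ℝ)} = {ω | X ω < m} := by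
      ext ω
      simp only [Set.mem_iUnion, Set.mem_setOf_eq]
      constructor
      · rintro ⟨n, hn⟩
        have : (0 : ℝ) < 1 / (n + 1 : ℝ) := by positivity
        linarith
      · intro h
        obtain ⟨n, hn⟩ := exists_nat_one_div_lt (sub_pos.2 h)
        exact ⟨n, by linarith⟩
    have hlt_eq : μ {ω | X ω < m} = μ {ω | X ω ≤ m} := by
      refine le_antisymm (measure_mono fun ω h => (le_of_lt h : X ω ≤ m)) ?_
      have hsub : {ω | X ω ≤ m} ⊆ {ω | X ω < m} ∪ {ω | X ω = m} := fun ω (h : X ω ≤ m) =>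
        (lt_or_eq_of_le h).imp (fun h' => h') (fun h' => h')
      calc μ {ω | X ω ≤ m} ≤ μ ({ω | X ω < m} ∪ {ω | X ω = m}) := measure_mono hsub
        _ ≤ μ {ω | X ω < m} + μ {ω | X ω = m} := measure_union_le _ _
        _ = μ {ω | X ω < m} := by rw [hFcont m, add_zero]
    have hlo : Tendsto (fun n : ℕ => μ {ω | X ω ≤ m - 1 / (n + 1 : ℝ)}) atTop
        (nhds (μ {ω | X ω ≤ m})) := by
      have := tendsto_measure_iUnion_atTop (μ := μ)
        (s := fun n : ℕ => {ω | X ω ≤ m - 1 / (n + 1 : ℝ)})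
        (fun a b hab ω hω => by
          simp only [Set.mem_setOf_eq] at *
          have : (1 : ℝ) / (b + 1) ≤ 1 / (a + 1) := by
            apply one_div_le_one_div_of_le (by positivity)
            exact_mod_cast by omega
          linarith)
      rwa [hiUnion, hlt_eq] at this
    -- pass to toReal
    have hupR : Tendsto (fun n : ℕ => F (m + 1 / (n + 1 : ℝ))) atTop (nhds (F m)) :=
      (ENNReal.tendsto_toReal (measure_ne_top μ _)).comp hup
    have hloR : Tendsto (fun n : ℕ => F (m - 1 / (n + 1 : ℝ))) atTop (nhds (F m)) :=
      (ENNReal.tendsto_toReal (measure_ne_top μ _)).comp hlo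
    have h1 := hupR.eventually_lt_const (show F m < F m + ε by linarith)
    have h2 := hloR.eventually_const_lt (show F m - ε < F m by linarith)
    obtain ⟨n, hn1, hn2⟩ := (h1.and h2).exists
    exact ⟨1 / (n + 1 : ℝ), by positivity, hn1, hn2⟩
  -- main argument
  rw [Metric.tendsto_nhds]
  intro ε hε
  obtain ⟨δ, hδ, hFu, hFl⟩ := key (ε / 2) (by linarith)
  have hsmall : ∀ᶠ s in l, μ {ω | δ / 2 < |Xs s ω - X ω|} < ENNReal.ofReal (ε / 2) :=
    (hconv (δ / 2) (by linarith)).eventually_lt_const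
      (by simp [ENNReal.ofReal_pos]; linarith)
  have hxs : ∀ᶠ s in l, |xs s - x| < δ / 2 := by
    have := Metric.tendsto_nhds.mp hx (δ / 2) (by linarith)
    simpa [Real.dist_eq] using this
  have hys : ∀ᶠ s in l, |ys s - y| < δ / 2 := by
    have := Metric.tendsto_nhds.mp hy (δ / 2) (by linarith)
    simpa [Real.dist_eq] using this
  filter_upwards [hsmall, hxs, hys] with s hs hxd hyd
  obtain ⟨hxd1, hxd2⟩ := abs_sub_lt_iff.mp hxd
  obtain ⟨hyd1, hyd2⟩ := abs_sub_lt_iff.mp hyd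
  have hmx : m ≤ x := min_le_left x y
  have hmy : m ≤ y := min_le_right x y
  -- upper inclusion
  have hsubU : {ω | Xs s ω ≤ xs s ∧ X ω ≤ ys s} ⊆
      {ω | X ω ≤ m + δ} ∪ {ω | δ / 2 < |Xs s ω - X ω|} := by
    rintro ω ⟨h1, h2⟩
    by_cases hd : δ / 2 < |Xs s ω - X ω|
    · exact Or.inr hd
    · left
      push_neg at hd
      obtain ⟨hd1, hd2⟩ := abs_sub_le_iff.mp hd
      have hXx : X ω ≤ x + δ := by linarith
      have hXy : X ω ≤ y + δ := by linarith
      show X ω ≤ m + δ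
      rcases min_cases x y with ⟨hmin, _⟩ | ⟨hmin, _⟩ <;> rw [hm, hmin] <;> linarith
  -- lower inclusion
  have hsubL : {ω | X ω ≤ m - δ} ⊆
      {ω | Xs s ω ≤ xs s ∧ X ω ≤ ys s} ∪ {ω | δ / 2 < |Xs s ω - X ω|} := by
    intro ω hω
    simp only [Set.mem_setOf_eq] at hω
    by_cases hd : δ / 2 < |Xs s ω - X ω|
    · exact Or.inr hd
    · left
      push_neg at hd
      obtain ⟨hd1, hd2⟩ := abs_sub_le_iff.mp hd
      exact ⟨by linarith, by linarith⟩
  -- measure inequalities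
  have hU : μ {ω | Xs s ω ≤ xs s ∧ X ω ≤ ys s} ≤
      μ {ω | X ω ≤ m + δ} + μ {ω | δ / 2 < |Xs s ω - X ω|} :=
    (measure_mono hsubU).trans (measure_union_le _ _)
  have hL : μ {ω | X ω ≤ m - δ} ≤
      μ {ω | Xs s ω ≤ xs s ∧ X ω ≤ ys s} + μ {ω | δ / 2 < |Xs s ω - X ω|} :=
    (measure_mono hsubL).trans (measure_union_le _ _)
  have hsR : (μ {ω | δ / 2 < |Xs s ω - X ω|}).toReal < ε / 2 := by
    rw [← ENNReal.toReal_ofReal (by linarith : (0:ℝ) ≤ ε / 2)]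
    exact ENNReal.toReal_strict_mono (by simp) hs
  have hUR : (μ {ω | Xs s ω ≤ xs s ∧ X ω ≤ ys s}).toReal ≤
      F (m + δ) + (μ {ω | δ / 2 < |Xs s ω - X ω|}).toReal := by
    rw [hFdef]
    have := ENNReal.toReal_mono
      (by simp [ENNReal.add_ne_top, measure_ne_top] : μ {ω | X ω ≤ m + δ} +
        μ {ω | δ / 2 < |Xs s ω - X ω|} ≠ ⊤) hU
    rwa [ENNReal.toReal_add (measure_ne_top μ _) (measure_ne_top μ _)] at this
  have hLR : F (m - δ) ≤ (μ {ω | Xs s ω ≤ xs s ∧ X ω ≤ ys s}).toReal +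
      (μ {ω | δ / 2 < |Xs s ω - X ω|}).toReal := by
    rw [hFdef]
    have := ENNReal.toReal_mono
      (by simp [ENNReal.add_ne_top, measure_ne_top] : μ {ω | Xs s ω ≤ xs s ∧ X ω ≤ ys s} +
        μ {ω | δ / 2 < |Xs s ω - X ω|} ≠ ⊤) hL
    rwa [ENNReal.toReal_add (measure_ne_top μ _) (measure_ne_top μ _)] at this
  rw [Real.dist_eq, abs_sub_lt_iff]
  constructor <;> simp only [hFdef] at hFu hFl hUR hLR ⊢ <;> linarith
end
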